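/- Fix n ≥ 3 and let K_n be the complete graph on the vertex set V = {1,…,n}, and let T be the finite set of all tours of V, i.e., all orderings τ = (v_1,…,v_n) of the n vertices, so |T| = n!. For a nonnegative edge-cost vector c : Sym2 V → ℝ≥0 and a tour τ = (v_1,…,v_n), define c(τ) = ∑_{i=2}^{n} dist_{c, {v_1,…,v_i}}(v_{i−1}, v_i) + dist_{c, V}(v_n, v_1), where dist_{c, S}(u, v) denotes the shortest-path distance between u and v with respect to c in the complete graph induced on the vertex set S; define the error η(τ,c) = c(τ) − min_{τ' ∈ T} c(τ'). Let D be a probability distribution on nonnegative edge-cost vectors and suppose there is η_max > 0 such that η(τ,c) ≤ η_max for every τ ∈ T and D-almost every c. Let ε, δ ∈ (0,1) and let m be an integer with m ≥ 2·ln(2·n!/δ)·η_max²/ε². Let C_1,…,C_m be independent random cost vectors each with law D, and let τ_p be any measurable random element of T that minimizes the empirical error (1/m)·∑_{i=1}^{m} η(τ, C_i) over τ ∈ T. Then with probability at least 1 − δ, E_{c∼D}[η(τ_p, c)] ≤ min_{τ ∈ T} E_{c∼D}[η(τ, c)] + ε. -/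

import Mathlib

/-! By Hoeffding's lemma each loss `tourErr n τ`, which lies in `[0, ηmax]`, is sub-Gaussian, so
Hoeffding's inequality puts the empirical mean of every fixed tour within `ε / 2` of its expected
error, except with probability `2 exp (-m ε² / (2 ηmax²))`. A union bound over the `n!` tours makes
this hold for all tours at once with probability at least `1 - δ`, and on that event the empirical
minimizer loses at most `ε / 2 + ε / 2` against any tour. -/

open MeasureTheory ProbabilityTheory

/-- The cost of traversing the list of vertices `l` in order, with respect to the
edge-cost vector `c`: the sum of `c` over consecutive pairs of `l`. -/
noncomputable def chainCost {n : ℕ} (c : Sym2 (Fin n) → ℝ) : List (Fin n) → ℝ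
  | [] => 0
  | [_] => 0
  | a :: b :: t => c s(a, b) + chainCost c (b :: t)

/-- The shortest-path distance between `u` and `v` with respect to the edge costs `c` in the
complete graph induced on the vertex set `S`. -/
noncomputable def distIn {n : ℕ} (c : Sym2 (Fin n) → ℝ) (S : Set (Fin n))
    (u v : Fin n) : ℝ :=
  sInf {x : ℝ | ∃ l : List (Fin n), (∀ y ∈ l, y ∈ S) ∧ l.head? = some u ∧
    l.getLast? = some v ∧ chainCost c l = x}

/-- The cost of the tour `τ = (τ 0, …, τ (n-1))` with respect to the edge costs `c`: each
next vertex `τ i` is reached from `τ (i-1)` via a shortest path in the complete graph induced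
on the already-visited vertices `{τ 0, …, τ i}`, and finally the tour returns from
`τ (n-1)` to `τ 0` via a shortest path in the whole graph. -/
noncomputable def tourCost {n : ℕ} (c : Sym2 (Fin n) → ℝ) (τ : Equiv.Perm (Fin n)) : ℝ :=
  (∑ i : Fin n, if h : (i : ℕ) + 1 < n then
      distIn c {x | ∃ j : Fin n, (j : ℕ) ≤ (i : ℕ) + 1 ∧ τ j = x}
        (τ i) (τ ⟨(i : ℕ) + 1, h⟩)
    else 0) +
  (if h : 0 < n then
      distIn c Set.univ (τ ⟨n - 1, by omega⟩) (τ ⟨0, h⟩)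
    else 0)

/-- The error of a tour `τ` with respect to an edge-cost vector `c`: the excess of its cost
over the cost of an optimal tour. -/
noncomputable def tourErr (n : ℕ) (τ : Equiv.Perm (Fin n)) (c : Sym2 (Fin n) → ℝ) : ℝ :=
  tourCost c τ - ⨅ τ' : Equiv.Perm (Fin n), tourCost c τ'

open Real Finset

lemma le_iInf_add_of_abs_sub_lt {H : Type*} [Finite H] {R S : H → ℝ} {m ε : ℝ}
    (hm : 0 ≤ m) (ĥ : H) (hmin : ∀ h, S ĥ ≤ S h)
    (hdev : ∀ h, |S h - m * R h| < m * (ε / 2)) :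
    R ĥ ≤ (⨅ h, R h) + ε := by
  have : Nonempty H := ⟨ĥ⟩
  rw [← sub_le_iff_le_add]
  refine le_ciInf fun h => ?_
  have hĥ := abs_lt.1 (hdev ĥ)
  have hh := abs_lt.1 (hdev h)
  have : m * R ĥ < m * (R h + ε) := by linarith [hmin h]
  linarith [lt_of_mul_lt_mul_left this hm]

section Sampling

variable {Ω α H : Type*} [MeasurableSpace Ω] [MeasurableSpace α] {P : Measure Ω}
  [IsProbabilityMeasure P] {D : Measure α} {m : ℕ}
  {X : Fin m → Ω → α} [Fintype H]

lemma measureReal_sum_sub_integral_ge_le (hX_meas : ∀ i, Measurable (X i))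
    (hX_indep : iIndepFun X P) (hX_law : ∀ i, P.map (X i) = D)
    {f : α → ℝ} (hf : Measurable f) {a b : ℝ} (hfab : ∀ᵐ x ∂D, f x ∈ Set.Icc a b)
    {s : ℝ} (hs : 0 ≤ s) :
    P.real {ω | m * s ≤ ∑ i, (f (X i ω) - ∫ x, f x ∂D)} ≤
      exp (-2 * m * s ^ 2 / (b - a) ^ 2) := by
  have hmean : ∀ i, P[f ∘ X i] = ∫ x, f x ∂D := fun i => by
    rw [← hX_law i, integral_map (hX_meas i).aemeasurable hf.aestronglyMeasurable]; rfl
  have hsubG : ∀ i ∈ (univ : Finset (Fin m)), HasSubgaussianMGF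
      (fun ω => f (X i ω) - ∫ x, f x ∂D) ((‖b - a‖₊ / 2) ^ 2) P := fun i _ => by
    have hab : ∀ᵐ ω ∂P, (f ∘ X i) ω ∈ Set.Icc a b :=
      ae_of_ae_map (hX_meas i).aemeasurable (by rwa [hX_law i])
    have := hasSubgaussianMGF_of_mem_Icc (hf.comp (hX_meas i)).aemeasurable hab
    rwa [hmean i] at this
  have hind : iIndepFun (fun i ω => f (X i ω) - ∫ x, f x ∂D) P :=
    hX_indep.comp (fun _ x => f x - ∫ x, f x ∂D) fun _ => hf.sub_const _
  refine (HasSubgaussianMGF.measure_sum_ge_le_of_iIndepFun hind hsubG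
    (by positivity)).trans_eq ?_
  congr 1
  simp only [sum_const, card_univ, Fintype.card_fin, nsmul_eq_mul, NNReal.coe_mul,
    NNReal.coe_natCast, NNReal.coe_pow, NNReal.coe_div, coe_nnnorm, Real.norm_eq_abs,
    NNReal.coe_ofNat, div_pow, sq_abs]
  -- the degenerate cases `m = 0` and `a = b` hold because `x / 0 = 0`
  rcases eq_or_ne (m : ℝ) 0 with hm | hm
  · simp [hm]
  rcases eq_or_ne ((b - a) ^ 2) 0 with hba | hba
  · simp [hba]
  field_simp

lemma measureReal_abs_sum_sub_integral_ge_le (hX_meas : ∀ i, Measurable (X i))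
    (hX_indep : iIndepFun X P) (hX_law : ∀ i, P.map (X i) = D)
    {f : α → ℝ} (hf : Measurable f) {a b : ℝ} (hfab : ∀ᵐ x ∂D, f x ∈ Set.Icc a b)
    {s : ℝ} (hs : 0 ≤ s) :
    P.real {ω | m * s ≤ |∑ i, (f (X i ω) - ∫ x, f x ∂D)|} ≤
      2 * exp (-2 * m * s ^ 2 / (b - a) ^ 2) := by
  have hnegab : ∀ᵐ x ∂D, (-f) x ∈ Set.Icc (-b) (-a) := by
    filter_upwards [hfab] with x hx using ⟨neg_le_neg hx.2, neg_le_neg hx.1⟩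
  have hupper := measureReal_sum_sub_integral_ge_le hX_meas hX_indep hX_law hf hfab hs
  have hlower := measureReal_sum_sub_integral_ge_le hX_meas hX_indep hX_law hf.neg hnegab hs
  have hsplit : {ω | m * s ≤ |∑ i, (f (X i ω) - ∫ x, f x ∂D)|} ⊆
      {ω | m * s ≤ ∑ i, (f (X i ω) - ∫ x, f x ∂D)} ∪
        {ω | m * s ≤ ∑ i, ((-f) (X i ω) - ∫ x, (-f) x ∂D)} := by
    intro ω hω
    have hneg : ∑ i, ((-f) (X i ω) - ∫ x, (-f) x ∂D) = -∑ i, (f (X i ω) - ∫ x, f x ∂D) := by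
      simp only [Pi.neg_apply, integral_neg, ← sum_neg_distrib, neg_sub_neg, neg_sub]
    rw [Set.mem_union, Set.mem_ofPred, Set.mem_ofPred, hneg]
    exact le_abs.1 hω
  calc _ ≤ _ := measureReal_mono hsplit
    _ ≤ _ := measureReal_union_le _ _
    _ ≤ _ := by rw [show -a - -b = b - a by ring] at hlower; linarith

theorem measureReal_iInf_add_lt_integral_erm_le (hX_meas : ∀ i, Measurable (X i))
    (hX_indep : iIndepFun X P) (hX_law : ∀ i, P.map (X i) = D)
    {ℓ : H → α → ℝ} (hℓ : ∀ h, Measurable (ℓ h)) {a b : ℝ}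
    (hℓab : ∀ h, ∀ᵐ x ∂D, ℓ h x ∈ Set.Icc a b)
    (ĥ : Ω → H) (hmin : ∀ ω h, ∑ i, ℓ (ĥ ω) (X i ω) ≤ ∑ i, ℓ h (X i ω))
    {ε : ℝ} (hε : 0 ≤ ε) :
    P.real {ω | (⨅ h, ∫ x, ℓ h x ∂D) + ε < ∫ x, ℓ (ĥ ω) x ∂D} ≤
      2 * Fintype.card H * exp (-m * ε ^ 2 / (2 * (b - a) ^ 2)) := by
  have hbad : {ω | (⨅ h, ∫ x, ℓ h x ∂D) + ε < ∫ x, ℓ (ĥ ω) x ∂D} ⊆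
      ⋃ h, {ω | m * (ε / 2) ≤ |∑ i, (ℓ h (X i ω) - ∫ x, ℓ h x ∂D)|} := by
    intro ω hω
    contrapose! hω
    simp only [Set.mem_iUnion, Set.mem_ofPred, not_exists, not_le, sum_sub_distrib, sum_const,
      card_univ, Fintype.card_fin, nsmul_eq_mul] at hω
    rw [Set.mem_ofPred, not_lt]
    exact le_iInf_add_of_abs_sub_lt m.cast_nonneg (ĥ ω) (hmin ω) hω
  calc _ ≤ _ := measureReal_mono hbad
    _ ≤ _ := measureReal_iUnion_fintype_le _
    _ ≤ ∑ _h : H, 2 * exp (-2 * m * (ε / 2) ^ 2 / (b - a) ^ 2) := sum_le_sum fun h _ =>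
        measureReal_abs_sum_sub_integral_ge_le hX_meas hX_indep hX_law (hℓ h) (hℓab h)
          (by positivity)
    _ = _ := by
      rw [sum_const, card_univ, nsmul_eq_mul, show -2 * (m : ℝ) * (ε / 2) ^ 2 = -m * ε ^ 2 / 2 by
        ring, div_div, mul_left_comm, mul_assoc]

end Sampling

lemma mul_exp_neg_le_of_log_div_le {K δ x : ℝ} (hK : 0 < K) (hδ : 0 < δ)
    (h : log (K / δ) ≤ x) : K * exp (-x) ≤ δ := by
  calc K * exp (-x) ≤ K * exp (-log (K / δ)) := by gcongr
    _ = δ := by rw [exp_neg, exp_log (by positivity), inv_div]; field_simp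

lemma ofReal_one_sub_le_of_measureReal_compl_le {Ω : Type*} [MeasurableSpace Ω]
    {P : Measure Ω} [IsProbabilityMeasure P] {s : Set Ω} {δ : ℝ} (h : P.real sᶜ ≤ δ) :
    ENNReal.ofReal (1 - δ) ≤ P s := by
  have := measureReal_union_le (μ := P) s sᶜ
  rw [Set.union_compl_self, probReal_univ] at this
  rw [← ofReal_measureReal]
  exact ENNReal.ofReal_le_ofReal (by linarith)

lemma measurable_chainCost {n : ℕ} (l : List (Fin n)) :
    Measurable fun c : Sym2 (Fin n) → ℝ => chainCost c l := by
  induction l with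
  | nil => exact measurable_const
  | cons a t ih =>
    cases t with
    | nil => exact measurable_const
    | cons b t => exact (measurable_pi_apply s(a, b)).add ih

lemma distIn_eq_iInf {n : ℕ} (c : Sym2 (Fin n) → ℝ) (S : Set (Fin n)) (u v : Fin n) :
    distIn c S u v = ⨅ l : {l : List (Fin n) // (∀ y ∈ l, y ∈ S) ∧ l.head? = some u ∧
      l.getLast? = some v}, chainCost c l.1 := by
  rw [distIn, iInf]
  congr 1
  ext x
  exact ⟨fun ⟨l, hS, hu, hv, hx⟩ => ⟨⟨l, hS, hu, hv⟩, hx⟩,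
    fun ⟨⟨l, hS, hu, hv⟩, hx⟩ => ⟨l, hS, hu, hv, hx⟩⟩

lemma measurable_distIn {n : ℕ} (S : Set (Fin n)) (u v : Fin n) :
    Measurable fun c : Sym2 (Fin n) → ℝ => distIn c S u v := by
  simp_rw [distIn_eq_iInf]
  exact Measurable.iInf fun l => measurable_chainCost l.1

lemma measurable_tourCost {n : ℕ} (τ : Equiv.Perm (Fin n)) :
    Measurable fun c : Sym2 (Fin n) → ℝ => tourCost c τ := by
  refine (Finset.measurable_sum _ fun i _ => ?_).add ?_
    <;> split_ifs <;> first | exact measurable_distIn _ _ _ | exact measurable_const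

lemma measurable_tourErr (n : ℕ) (τ : Equiv.Perm (Fin n)) : Measurable (tourErr n τ) :=
  (measurable_tourCost τ).sub (Measurable.iInf fun τ' => measurable_tourCost τ')

lemma tourErr_nonneg (n : ℕ) (τ : Equiv.Perm (Fin n)) (c : Sym2 (Fin n) → ℝ) :
    0 ≤ tourErr n τ c :=
  sub_nonneg.2 (ciInf_le (Set.finite_range _).bddBelow τ)

theorem stmt_8_general (n : ℕ)
    (D : Measure (Sym2 (Fin n) → ℝ)) [IsProbabilityMeasure D]
    (ηmax : ℝ) (hηmax : 0 < ηmax)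
    (hbound : ∀ᵐ c ∂D, ∀ τ : Equiv.Perm (Fin n), tourErr n τ c ≤ ηmax)
    (ε δ : ℝ) (hε : ε ∈ Set.Ioo (0 : ℝ) 1) (hδ : δ ∈ Set.Ioo (0 : ℝ) 1)
    (m : ℕ)
    (hm : 2 * Real.log (2 * (n.factorial : ℝ) / δ) * ηmax ^ 2 / ε ^ 2 ≤ (m : ℝ))
    (Ω : Type*) [MeasurableSpace Ω] (P : Measure Ω) [IsProbabilityMeasure P]
    (X : Fin m → Ω → (Sym2 (Fin n) → ℝ))
    (hX_meas : ∀ i, Measurable (X i))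
    (hX_indep : iIndepFun X P)
    (hX_law : ∀ i, Measure.map (X i) P = D)
    (τp : Ω → Equiv.Perm (Fin n))
    (hτp_min : ∀ ω, ∀ τ : Equiv.Perm (Fin n),
      (1 / (m : ℝ)) * ∑ i : Fin m, tourErr n (τp ω) (X i ω) ≤
        (1 / (m : ℝ)) * ∑ i : Fin m, tourErr n τ (X i ω)) :
    ENNReal.ofReal (1 - δ) ≤
      P {ω | ∫ c, tourErr n (τp ω) c ∂D ≤
        (⨅ τ : Equiv.Perm (Fin n), ∫ c, tourErr n τ c ∂D) + ε} := by
  obtain ⟨hε, -⟩ := hε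
  obtain ⟨hδ, -⟩ := hδ
  have hmin : ∀ ω τ, ∑ i, tourErr n (τp ω) (X i ω) ≤ ∑ i, tourErr n τ (X i ω) := by
    intro ω τ
    rcases m.eq_zero_or_pos with rfl | hm0
    · simp
    · exact le_of_mul_le_mul_left (hτp_min ω τ) (by positivity)
  have hrange : ∀ τ, ∀ᵐ c ∂D, tourErr n τ c ∈ Set.Icc 0 ηmax := fun τ => by
    filter_upwards [hbound] with c hc using ⟨tourErr_nonneg n τ c, hc τ⟩
  have hconf : 2 * (n.factorial : ℝ) * exp (-m * ε ^ 2 / (2 * (ηmax - 0) ^ 2)) ≤ δ := by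
    rw [neg_mul, neg_div]
    refine mul_exp_neg_le_of_log_div_le (by positivity) hδ ?_
    rw [sub_zero, le_div_iff₀ (by positivity)]
    rw [div_le_iff₀ (by positivity)] at hm
    linarith
  apply ofReal_one_sub_le_of_measureReal_compl_le
  simp only [Set.compl_ofPred, not_le]
  refine (measureReal_iInf_add_lt_integral_erm_le hX_meas hX_indep hX_law (measurable_tourErr n)
    hrange τp hmin hε.le).trans ?_
  rwa [Fintype.card_perm, Fintype.card_fin]

/-- **PAC learnability of tour predictions.** Empirical risk minimization over the finite
class of all `n!` tours of the vertices of `K_n`, using `m ≥ 2 ln(2·n!/δ) η_max² / ε²`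
i.i.d. samples from `D`, returns with probability at least `1 − δ` a tour whose expected
error is within `ε` of the best expected error. -/
theorem stmt_8 (n : ℕ) (hn : 3 ≤ n)
    (D : Measure (Sym2 (Fin n) → ℝ)) [IsProbabilityMeasure D]
    (hpos : ∀ᵐ c ∂D, ∀ e : Sym2 (Fin n), 0 ≤ c e)
    (ηmax : ℝ) (hηmax : 0 < ηmax)
    (hbound : ∀ᵐ c ∂D, ∀ τ : Equiv.Perm (Fin n), tourErr n τ c ≤ ηmax)
    (ε δ : ℝ) (hε : ε ∈ Set.Ioo (0 : ℝ) 1) (hδ : δ ∈ Set.Ioo (0 : ℝ) 1)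
    (m : ℕ)
    (hm : 2 * Real.log (2 * (n.factorial : ℝ) / δ) * ηmax ^ 2 / ε ^ 2 ≤ (m : ℝ))
    (Ω : Type*) [MeasurableSpace Ω] (P : Measure Ω) [IsProbabilityMeasure P]
    (X : Fin m → Ω → (Sym2 (Fin n) → ℝ))
    (hX_meas : ∀ i, Measurable (X i))
    (hX_indep : iIndepFun X P)
    (hX_law : ∀ i, Measure.map (X i) P = D)
    (τp : Ω → Equiv.Perm (Fin n))
    (hτp_meas : @Measurable Ω (Equiv.Perm (Fin n)) _ ⊤ τp)
    (hτp_min : ∀ ω, ∀ τ : Equiv.Perm (Fin n),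
      (1 / (m : ℝ)) * ∑ i : Fin m, tourErr n (τp ω) (X i ω) ≤
        (1 / (m : ℝ)) * ∑ i : Fin m, tourErr n τ (X i ω)) :
    ENNReal.ofReal (1 - δ) ≤
      P {ω | ∫ c, tourErr n (τp ω) c ∂D ≤
        (⨅ τ : Equiv.Perm (Fin n), ∫ c, tourErr n τ c ∂D) + ε} :=
  stmt_8_general n D ηmax hηmax hbound ε δ hε hδ m hm Ω P X hX_meas hX_indep hX_law τp hτp_min
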